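/- Let γ ∈ (0,1), σ_D > 0, A > 1, and ξ > 0. Suppose h ∈ C([0,1]) ∩ C¹([0,1)) satisfies 0 ≤ h(y) ≤ 1 for all y ∈ [0,1], h(0) = γ, h(1) = 1, and h'(y) = a₀(y) + (a₁(y)/(1−y))·h(y) + (a₂(h,y)/(1−y))·h(y)² for all y ∈ (0,1). Then h(y) ≥ γ for all y ∈ [0,1]. -/

import Mathlib

/-!
Put `u = h - γ`. Since `a₀(y) + γ a₁(y)/(1-y) = γ²/(1-y)`, the Riccati equation becomes the
linear equation `u' = c u + s` with source `s = γ²(1 + a₂)/(1-y)`. Because `h ≤ 1`, the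
integral in `a₂` decreases in `y`, so `s` changes sign at most once, from `+` to `-`.
If `u(y₀) < 0` and `s(y₀) ≥ 0`, then `s ≥ 0` on `(0, y₀]`, and since `c` is bounded above
there, a comparison with `u(y₀) e^{K(t - y₀)}` backwards in time gives `u(0) < 0`.
If `s(y₀) < 0`, then `u' < 0` wherever `u = 0` on `[y₀, 1)`, so `u(1) ≤ 0`; but `u(1) = 1 - γ`.
-/

open Set Real

/-- `a₀(y) = γ(1+γ)/y`. -/
noncomputable def a0 (γ y : ℝ) : ℝ := γ * (1 + γ) / y

/-- `a₁(y) = ((2γ+1)y − (1+γ))/y`. -/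
noncomputable def a1 (γ y : ℝ) : ℝ := ((2 * γ + 1) * y - (1 + γ)) / y

/-- `a₂(h,y) = (ξ/σ_D²)·exp(∫₀^y (h(q)−1)/(1−q) dq) − A`. -/
noncomputable def a2 (ξ σD A : ℝ) (h : ℝ → ℝ) (y : ℝ) : ℝ :=
  ξ / σD ^ 2 * Real.exp (∫ q in (0:ℝ)..y, (h q - 1) / (1 - q)) - A

open MeasureTheory

theorem antitoneOn_integral_of_nonpos {f : ℝ → ℝ} {a b : ℝ} (hf : ContinuousOn f (Ico a b))
    (hf0 : ∀ x ∈ Ico a b, f x ≤ 0) : AntitoneOn (fun y => ∫ x in a..y, f x) (Ico a b) := by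
  intro x hx y hy hxy
  have hint : ∀ {p q}, p ∈ Ico a b → q ∈ Ico a b → IntervalIntegrable f volume p q :=
    fun hp hq => (hf.mono (ordConnected_Ico.uIcc_subset hp hq)).intervalIntegrable
  have hxy_nonpos : ∫ t in x..y, f t ≤ 0 := by
    simpa using intervalIntegral.integral_mono_on hxy (hint hx hy) intervalIntegrable_const
      fun t ht => hf0 t ⟨hx.1.trans ht.1, ht.2.trans_lt hy.2⟩
  have hsplit := intervalIntegral.integral_add_adjacent_intervals
    (hint ⟨le_rfl, hx.1.trans_lt hx.2⟩ hx) (hint hx hy)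
  simp only
  linarith

theorem le_mul_exp_of_mul_lt_deriv {u u' : ℝ → ℝ} {a b K : ℝ}
    (hcont : ContinuousOn u (Icc a b)) (hderiv : ∀ t ∈ Ioc a b, HasDerivAt u (u' t) t)
    (hb : u b < 0) (hK : ∀ t ∈ Ioc a b, u t < 0 → K * u t < u' t) :
    ∀ t ∈ Icc a b, u t ≤ u b * exp (K * (t - b)) := by
  -- the forward fencing theorem, applied after reflecting `[a, b]` by `τ ↦ a + b - τ`
  have hrefl : MapsTo (fun τ => a + b - τ) (Icc a b) (Icc a b) :=
    fun τ hτ => ⟨by linarith [hτ.2], by linarith [hτ.1]⟩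
  have key := image_le_of_deriv_right_lt_deriv_boundary (a := a) (b := b)
    (f := fun τ => u (a + b - τ)) (f' := fun τ => -u' (a + b - τ))
    (B := fun τ => u b * exp (K * (a - τ))) (B' := fun τ => -K * (u b * exp (K * (a - τ))))
    (hcont.comp (continuousOn_const.sub continuousOn_id) hrefl)
    (fun τ hτ => (hderiv (a + b - τ) ⟨by linarith [hτ.2], by linarith [hτ.1]⟩).comp_const_sub
      |>.hasDerivWithinAt)
    (by simp)
    (fun τ => ((((hasDerivAt_id' τ).const_sub a).const_mul K).exp.const_mul (u b)).congr_deriv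
      (by ring))
    (fun τ hτ hEq => by
      have hneg : u (a + b - τ) < 0 := hEq ▸ mul_neg_of_neg_of_pos hb (exp_pos _)
      have := hK (a + b - τ) ⟨by linarith [hτ.2], by linarith [hτ.1]⟩ hneg
      rw [← hEq]
      linarith)
  intro t ht
  have := key (hrefl ht)
  rw [sub_sub_cancel] at this
  convert this using 3
  ring

theorem nonneg_of_hasDerivAt_linear {u u' c s : ℝ → ℝ}
    (hcont : ContinuousOn u (Icc 0 1)) (hderiv : ∀ y ∈ Ioo 0 1, HasDerivAt u (u' y) y)
    (hode : ∀ y ∈ Ioo 0 1, u' y = c y * u y + s y)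
    (hc : ∀ b < 1, ∃ K, ∀ t ∈ Ioc 0 b, c t < K)
    (hs : ∀ x ∈ Ioo 0 1, ∀ y ∈ Ioo 0 1, x ≤ y → 0 ≤ s y → 0 ≤ s x)
    (h0 : 0 ≤ u 0) (h1 : 0 < u 1) : ∀ y ∈ Icc 0 1, 0 ≤ u y := by
  intro y₀ hy₀
  by_contra! hneg
  have hy₀' : y₀ ∈ Ioo 0 1 :=
    ⟨hy₀.1.lt_of_ne (by rintro rfl; linarith), hy₀.2.lt_of_ne (by rintro rfl; linarith)⟩
  rcases le_or_gt 0 (s y₀) with hsrc | hsrc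
  · obtain ⟨K, hK⟩ := hc y₀ hy₀'.2
    have hmem : ∀ t ∈ Ioc 0 y₀, t ∈ Ioo 0 1 := fun t ht => ⟨ht.1, ht.2.trans_lt hy₀'.2⟩
    have := le_mul_exp_of_mul_lt_deriv (K := K) (hcont.mono (Icc_subset_Icc_right hy₀.2))
      (fun t ht => hderiv t (hmem t ht)) hneg
      (fun t ht hut => by
        rw [hode t (hmem t ht)]
        nlinarith [hK t ht, hs t (hmem t ht) y₀ hy₀' ht.2 hsrc])
      0 ⟨le_rfl, hy₀.1⟩
    nlinarith [exp_pos (K * (0 - y₀))]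
  · have hmem : ∀ t ∈ Ico y₀ 1, t ∈ Ioo 0 1 := fun t ht => ⟨hy₀'.1.trans_le ht.1, ht.2⟩
    have := image_le_of_deriv_right_lt_deriv_boundary (B := fun _ => 0) (B' := fun _ => 0)
      (hcont.mono (Icc_subset_Icc_left hy₀.1))
      (fun t ht => (hderiv t (hmem t ht)).hasDerivWithinAt) hneg.le
      (fun _ => hasDerivAt_const _ _)
      (fun t ht hut => by
        rw [hode t (hmem t ht), hut, mul_zero, zero_add]
        by_contra! hst
        linarith [hs y₀ hy₀' t (hmem t ht) ht.1 hst])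
      ⟨hy₀'.2.le, le_rfl⟩
    linarith

theorem a2_antitoneOn {ξ σD A : ℝ} {h : ℝ → ℝ} (hξ : 0 ≤ ξ) (hc : ContinuousOn h (Ico 0 1))
    (hh : ∀ y ∈ Ico (0:ℝ) 1, h y ≤ 1) : AntitoneOn (a2 ξ σD A h) (Ico 0 1) := by
  have hint := antitoneOn_integral_of_nonpos (f := fun q => (h q - 1) / (1 - q))
    ((hc.sub continuousOn_const).div (continuousOn_const.sub continuousOn_id)
      fun q hq => sub_ne_zero.2 hq.2.ne')
    fun q hq => div_nonpos_of_nonpos_of_nonneg (by linarith [hh q hq]) (by linarith [hq.2])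
  intro x hx y hy hxy
  have : 0 ≤ ξ / σD ^ 2 := by positivity
  unfold a2
  gcongr
  exact hint hx hy hxy

theorem a2_le_of_mem_Ico {ξ σD A : ℝ} {h : ℝ → ℝ} (hξ : 0 ≤ ξ) (hc : ContinuousOn h (Ico 0 1))
    (hh : ∀ y ∈ Ico (0:ℝ) 1, h y ≤ 1) {y : ℝ} (hy : y ∈ Ico (0:ℝ) 1) :
    a2 ξ σD A h y ≤ ξ / σD ^ 2 - A := by
  simpa [a2] using a2_antitoneOn (σD := σD) (A := A) hξ hc hh ⟨le_rfl, zero_lt_one⟩ hy hy.1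

theorem riccati_rhs_eq (γ a x y : ℝ) (hy : y ≠ 0) (hy1 : 1 - y ≠ 0) :
    a0 γ y + a1 γ y / (1 - y) * x + a / (1 - y) * x ^ 2
      = (a1 γ y + a * (x + γ)) / (1 - y) * (x - γ) + γ ^ 2 / (1 - y) * (1 + a) := by
  unfold a0 a1
  field_simp
  ring

theorem a1_add_mul_div_lt {γ a m x t b : ℝ} (hγ : γ ∈ Icc (0:ℝ) 1) (hx : x ∈ Icc (0:ℝ) 1)
    (ha : a ≤ m) (hm : 0 ≤ m) (ht : t ∈ Ioc 0 b) (hb : b < 1) :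
    (a1 γ t + a * (x + γ)) / (1 - t) < (2 * γ + 1 + 2 * m) / (1 - b) := by
  have ha1 : a1 γ t < 2 * γ + 1 := by
    rw [a1, sub_div, mul_div_cancel_right₀ _ ht.1.ne']
    linarith [div_pos (by linarith [hγ.1] : (0:ℝ) < 1 + γ) ht.1]
  have hax : a * (x + γ) ≤ 2 * m := by nlinarith [hx.1, hx.2, hγ.1, hγ.2]
  calc (a1 γ t + a * (x + γ)) / (1 - t) < (2 * γ + 1 + 2 * m) / (1 - t) :=
        div_lt_div_of_pos_right (by linarith) (by linarith [ht.2])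
    _ ≤ (2 * γ + 1 + 2 * m) / (1 - b) :=
        div_le_div_of_nonneg_left (by linarith [hγ.1]) (by linarith) (by linarith [ht.2])

theorem stmt15_general (γ σD A ξ : ℝ) (hγ : γ ∈ Ioo (0:ℝ) 1)
    (hA : 1 < A) (hξ : 0 < ξ)
    (h h' : ℝ → ℝ)
    (hc : ContinuousOn h (Icc (0:ℝ) 1))
    (hd : ∀ y ∈ Ico (0:ℝ) 1, HasDerivWithinAt h (h' y) (Ico (0:ℝ) 1) y)
    (hbd : ∀ y ∈ Icc (0:ℝ) 1, 0 ≤ h y ∧ h y ≤ 1)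
    (h0 : h 0 = γ) (h1 : h 1 = 1)
    (hode : ∀ y ∈ Ioo (0:ℝ) 1,
      h' y = a0 γ y + a1 γ y / (1 - y) * h y + a2 ξ σD A h y / (1 - y) * h y ^ 2) :
    ∀ y ∈ Icc (0:ℝ) 1, γ ≤ h y := by
  obtain ⟨hγ0, hγ1⟩ := hγ
  have hc₀ : ContinuousOn h (Ico 0 1) := hc.mono Ico_subset_Icc_self
  have hle₁ : ∀ y ∈ Ico (0:ℝ) 1, h y ≤ 1 := fun y hy => (hbd y (Ico_subset_Icc_self hy)).2
  have ha2 : AntitoneOn (a2 ξ σD A h) (Ico 0 1) := a2_antitoneOn hξ.le hc₀ hle₁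
  have hu := nonneg_of_hasDerivAt_linear (u := fun y => h y - γ) (u' := h')
    (c := fun y => (a1 γ y + a2 ξ σD A h y * (h y + γ)) / (1 - y))
    (s := fun y => γ ^ 2 / (1 - y) * (1 + a2 ξ σD A h y))
    (hc.sub continuousOn_const)
    (fun y hy => ((hd y (Ioo_subset_Ico_self hy)).hasDerivAt (Ico_mem_nhds hy.1 hy.2)).sub_const γ)
    (fun y hy => (hode y hy).trans (riccati_rhs_eq _ _ _ _ hy.1.ne' (sub_ne_zero.2 hy.2.ne')))
    (fun b hb => ⟨_, fun t ht => a1_add_mul_div_lt (m := ξ / σD ^ 2) ⟨hγ0.le, hγ1.le⟩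
      (hbd t ⟨ht.1.le, ht.2.trans hb.le⟩)
      ((a2_le_of_mem_Ico hξ.le hc₀ hle₁ ⟨ht.1.le, ht.2.trans_lt hb⟩).trans (by linarith))
      (by positivity) ht hb⟩)
    (fun x hx y hy hxy hsy => by
      rw [mul_nonneg_iff_of_pos_left (div_pos (pow_pos hγ0 2) (sub_pos.2 hy.2))] at hsy
      rw [mul_nonneg_iff_of_pos_left (div_pos (pow_pos hγ0 2) (sub_pos.2 hx.2))]
      linarith [ha2 (Ioo_subset_Ico_self hx) (Ioo_subset_Ico_self hy) hxy])
    (by simp [h0]) (by simp [h1, hγ1])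
  exact fun y hy => sub_nonneg.1 (hu y hy)

/-- If `h ∈ C([0,1]) ∩ C¹([0,1))` with `0 ≤ h ≤ 1` solves the
path-dependent Riccati ODE with `h 0 = γ` and `h 1 = 1`, then `h ≥ γ` on `[0,1]`. -/
theorem stmt15 (γ σD A ξ : ℝ) (hγ : γ ∈ Ioo (0:ℝ) 1) (hσ : 0 < σD)
    (hA : 1 < A) (hξ : 0 < ξ)
    (h h' : ℝ → ℝ)
    (hc : ContinuousOn h (Icc (0:ℝ) 1))
    (hc' : ContinuousOn h' (Ico (0:ℝ) 1))
    (hd : ∀ y ∈ Ico (0:ℝ) 1, HasDerivWithinAt h (h' y) (Ico (0:ℝ) 1) y)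
    (hbd : ∀ y ∈ Icc (0:ℝ) 1, 0 ≤ h y ∧ h y ≤ 1)
    (h0 : h 0 = γ) (h1 : h 1 = 1)
    (hode : ∀ y ∈ Ioo (0:ℝ) 1,
      h' y = a0 γ y + a1 γ y / (1 - y) * h y + a2 ξ σD A h y / (1 - y) * h y ^ 2) :
    ∀ y ∈ Icc (0:ℝ) 1, γ ≤ h y :=
  stmt15_general γ σD A ξ hγ hA hξ h h' hc hd hbd h0 h1 hode
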